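/- arXiv:1901.03192 — 9 statements merged into one kernel-verified Lean document; each statement's English description precedes it below -/
import Mathlib

section
/- Let q : ℝ → ℝ satisfy (A1) q(0) = q(1) = 0, (A2) q is twice differentiable on [0,1], and (A3) q is strictly concave on [0,1]. Then the function π(u) = q(u)/(1 + q(u)) also satisfies (A1), (A2) and (A3); that is, π(0) = π(1) = 0, π is twice differentiable on [0,1], and π is strictly concave on [0,1]. -/
/-!
Write `π = g ∘ q` with `g t = t / (1 + t)`, which is concave and strictly increasing on
`(-1, ∞)`; since `q ≥ 0` on `[0, 1]`, `π` is strictly concave there. Near a point `u` of `[0, 1]`,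
`deriv π = (deriv g ∘ q) • deriv q` as soon as `q` is differentiable on a whole neighbourhood of
`u`. At an interior point this is the hypothesis; at the endpoints it holds because `deriv q` is
continuous there and nonzero (`q' 0 > 0 > q' 1` by strict concavity, as `q 0 = q 1`).
-/

open Set Filter Topology

/-- `deriv f` takes the junk value `0` wherever `f` is not differentiable. -/
theorem ContinuousAt.eventually_differentiableAt_of_deriv_ne_zero {𝕜 F : Type*}
    [NontriviallyNormedField 𝕜] [NormedAddCommGroup F] [NormedSpace 𝕜 F] {f : 𝕜 → F} {x : 𝕜}
    (hf : ContinuousAt (deriv f) x) (hx : deriv f x ≠ 0) :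
    ∀ᶠ y in 𝓝 x, DifferentiableAt 𝕜 f y :=
  (hf.eventually_ne hx).mono fun _ hy =>
    by_contra fun h => hy (deriv_zero_of_not_differentiableAt h)

theorem ContDiffAt.differentiableAt_deriv_comp {𝕜 F : Type*}
    [NontriviallyNormedField 𝕜] [NormedAddCommGroup F] [NormedSpace 𝕜 F] {f : 𝕜 → F}
    {g : 𝕜 → 𝕜} {x : 𝕜} (hf : ContDiffAt 𝕜 2 f (g x))
    (hg : ∀ᶠ y in 𝓝 x, DifferentiableAt 𝕜 g y) (hg' : DifferentiableAt 𝕜 (deriv g) x) :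
    DifferentiableAt 𝕜 (deriv (f ∘ g)) x := by
  have hf_near : ∀ᶠ y in 𝓝 x, DifferentiableAt 𝕜 f (g y) :=
    hg.self_of_nhds.continuousAt.tendsto.eventually <|
      (hf.eventually (by simp)).mono fun _ h => h.differentiableAt (by simp)
  have hderiv : deriv (f ∘ g) =ᶠ[𝓝 x] fun y => deriv g y • deriv f (g y) := by
    filter_upwards [hg, hf_near] with y hgy hfy
    exact deriv.scomp y hfy hgy
  have hf' : DifferentiableAt 𝕜 (deriv f) (g x) :=
    (hf.derivWithin (m := 1) (by norm_num)).differentiableAt one_ne_zero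
  exact (hg'.smul (hf'.comp x hg.self_of_nhds)).congr_of_eventuallyEq hderiv

theorem eventually_differentiableAt_of_mem_Icc {f : ℝ → ℝ} {a b x : ℝ}
    (hf : ∀ y ∈ Icc a b, DifferentiableAt ℝ f y) (ha : ContinuousAt (deriv f) a)
    (ha' : deriv f a ≠ 0) (hb : ContinuousAt (deriv f) b) (hb' : deriv f b ≠ 0)
    (hx : x ∈ Icc a b) : ∀ᶠ y in 𝓝 x, DifferentiableAt ℝ f y := by
  rcases eq_endpoints_or_mem_Ioo_of_mem_Icc hx with rfl | rfl | hx'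
  · exact ha.eventually_differentiableAt_of_deriv_ne_zero ha'
  · exact hb.eventually_differentiableAt_of_deriv_ne_zero hb'
  · filter_upwards [Ioo_mem_nhds hx'.1 hx'.2] with y hy using hf y (Ioo_subset_Icc_self hy)

theorem concaveOn_div_one_add : ConcaveOn ℝ (Ioi (-1)) fun t : ℝ => t / (1 + t) := by
  refine ⟨convex_Ioi _, fun x hx y hy a b ha hb hab => ?_⟩
  have hxy := convex_Ioi (-1 : ℝ) hx hy ha hb hab
  simp only [smul_eq_mul, mem_Ioi] at hx hy hxy ⊢
  have hx : 0 < 1 + x := by linarith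
  have hy : 0 < 1 + y := by linarith
  rw [← mul_div_assoc, ← mul_div_assoc, div_add_div _ _ hx.ne' hy.ne',
    div_le_div_iff₀ (by positivity) (by linarith)]
  obtain rfl : b = 1 - a := by linarith
  nlinarith [mul_nonneg (mul_nonneg ha hb) (sq_nonneg (x - y))]

theorem strictMonoOn_div_one_add : StrictMonoOn (fun t : ℝ => t / (1 + t)) (Ioi (-1)) := by
  intro x hx y hy hxy
  have hx : 0 < 1 + x := by linarith [mem_Ioi.mp hx]
  have hy : 0 < 1 + y := by linarith [mem_Ioi.mp hy]
  simp only
  rw [div_lt_div_iff₀ hx hy]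
  linarith

theorem contDiffAt_div_one_add {x : ℝ} (hx : 1 + x ≠ 0) :
    ContDiffAt ℝ 2 (fun t : ℝ => t / (1 + t)) x :=
  contDiffAt_id.div (contDiffAt_const.add contDiffAt_id) hx

/-- Observation 1: if `q` satisfies (A1) `q 0 = q 1 = 0`, (A2) `q` twice differentiable
on `[0,1]`, and (A3) `q` strictly concave on `[0,1]`, then `π u = q u / (1 + q u)`
also satisfies (A1), (A2) and (A3). -/
theorem pi_satisfies_A1_A2_A3 (q : ℝ → ℝ)
    (hq0 : q 0 = 0) (hq1 : q 1 = 0)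
    (hq2 : ∀ u ∈ Set.Icc (0:ℝ) 1, DifferentiableAt ℝ q u ∧ DifferentiableAt ℝ (deriv q) u)
    (hqc : StrictConcaveOn ℝ (Set.Icc (0:ℝ) 1) q)
    (π : ℝ → ℝ) (hπ : ∀ u, π u = q u / (1 + q u)) :
    π 0 = 0 ∧ π 1 = 0 ∧
    (∀ u ∈ Set.Icc (0:ℝ) 1, DifferentiableAt ℝ π u ∧ DifferentiableAt ℝ (deriv π) u) ∧
    StrictConcaveOn ℝ (Set.Icc (0:ℝ) 1) π := by
  obtain rfl : π = (fun t => t / (1 + t)) ∘ q := funext hπ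
  have h0 : (0 : ℝ) ∈ Icc (0 : ℝ) 1 := left_mem_Icc.2 zero_le_one
  have h1 : (1 : ℝ) ∈ Icc (0 : ℝ) 1 := right_mem_Icc.2 zero_le_one
  have hq_nonneg : ∀ u ∈ Icc (0 : ℝ) 1, 0 ≤ q u := fun u hu => by
    simpa [hq0, hq1] using hqc.concaveOn.min_le_of_mem_Icc h0 h1 hu
  have hmaps : q '' Icc 0 1 ⊆ Ioi (-1) := by
    rintro _ ⟨u, hu, rfl⟩
    exact neg_one_lt_zero.trans_le (hq_nonneg u hu)
  have hslope : slope q 0 1 = 0 := by simp [slope_def_field, hq0, hq1]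
  have hd0 : deriv q 0 ≠ 0 := (hslope ▸ hqc.slope_lt_deriv h0 h1 zero_lt_one (hq2 0 h0).1).ne'
  have hd1 : deriv q 1 ≠ 0 := (hslope ▸ hqc.deriv_lt_slope h0 h1 zero_lt_one (hq2 1 h1).1).ne
  have hg_smooth : ∀ u ∈ Icc (0 : ℝ) 1, ContDiffAt ℝ 2 (fun t : ℝ => t / (1 + t)) (q u) :=
    fun u hu => contDiffAt_div_one_add (by linarith [hq_nonneg u hu])
  refine ⟨by simp [hq0], by simp [hq1], fun u hu => ⟨?_, ?_⟩, ?_⟩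
  · exact ((hg_smooth u hu).differentiableAt two_ne_zero).comp u (hq2 u hu).1
  · refine (hg_smooth u hu).differentiableAt_deriv_comp ?_ (hq2 u hu).2
    exact eventually_differentiableAt_of_mem_Icc (fun y hy => (hq2 y hy).1)
      (hq2 0 h0).2.continuousAt hd0 (hq2 1 h1).2.continuousAt hd1 hu
  · have hconv : Convex ℝ (q '' Icc 0 1) := Real.convex_iff_isPreconnected.2 <|
      isPreconnected_Icc.image q fun u hu => (hq2 u hu).1.continuousAt.continuousWithinAt
    exact (concaveOn_div_one_add.subset hmaps hconv).comp_strictConcaveOn hqc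
      (strictMonoOn_div_one_add.mono hmaps)
end

section
/- Let q : ℝ → ℝ satisfy (A1) q(0) = q(1) = 0, (A2) q is twice differentiable on [0,1], and (A3) q is strictly concave on [0,1], with q'(0) > 0. Then for every c with 0 < c < q'(0), there exists a unique u ∈ (0,1) such that q'(u)/(1 + q(u))² = c. -/
/-!
Strict concavity makes `q'` strictly decreasing, and `q' y ≥ 0` forces `q x < q y` for `x < y`
(the chord from `x` to `y` is steeper than the tangent at `y`). Hence `q' 1 < 0` since
`q 0 = q 1`, and on the set where `q' > 0` the numerator `q'` decreases while the denominator
`(1 + q)²` increases, so `q' / (1 + q)²` is strictly decreasing there. Existence follows from the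
intermediate value theorem between `q' 0 > c` and `q' 1 < 0 < c`; any solution has `q' > 0`,
which gives uniqueness.
-/

open Set

namespace StrictConcaveOn

variable {S : Set ℝ} {f : ℝ → ℝ}

theorem lt_of_deriv_nonneg (hf : StrictConcaveOn ℝ S f) {x y : ℝ} (hx : x ∈ S) (hy : y ∈ S)
    (hxy : x < y) (hfd : DifferentiableAt ℝ f y) (hderiv : 0 ≤ deriv f y) : f x < f y := by
  have hslope : 0 < slope f x y := hderiv.trans_lt (hf.deriv_lt_slope hx hy hxy hfd)
  rw [slope_def_field, div_pos_iff_of_pos_right (sub_pos.2 hxy)] at hslope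
  exact sub_pos.1 hslope

theorem strictAntiOn_deriv_div_one_add_sq (hf : StrictConcaveOn ℝ S f)
    (hfd : ∀ x ∈ S, DifferentiableAt ℝ f x) (hf1 : ∀ x ∈ S, 0 < 1 + f x) :
    StrictAntiOn (fun x => deriv f x / (1 + f x) ^ 2) {x ∈ S | 0 < deriv f x} := by
  intro x hx y hy hxy
  have hfxy : f x < f y := hf.lt_of_deriv_nonneg hx.1 hy.1 hxy (hfd y hy.1) hy.2.le
  have hx1 := hf1 x hx.1
  have hden : (1 + f x) ^ 2 < (1 + f y) ^ 2 := by gcongr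
  calc deriv f y / (1 + f y) ^ 2 < deriv f y / (1 + f x) ^ 2 :=
        div_lt_div_of_pos_left hy.2 (by positivity) hden
    _ < deriv f x / (1 + f x) ^ 2 :=
        div_lt_div_of_pos_right (hf.strictAntiOn_deriv hfd hx.1 hy.1 hxy) (by positivity)

end StrictConcaveOn

theorem exists_unique_ubar_general (q : ℝ → ℝ)
    (hq0 : q 0 = 0) (hq1 : q 1 = 0)
    (hq2 : ∀ u ∈ Set.Icc (0:ℝ) 1, DifferentiableAt ℝ q u ∧ DifferentiableAt ℝ (deriv q) u)
    (hqc : StrictConcaveOn ℝ (Set.Icc (0:ℝ) 1) q) :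
    ∀ c : ℝ, 0 < c → c < deriv q 0 →
      ∃! u : ℝ, u ∈ Set.Ioo (0:ℝ) 1 ∧ deriv q u / (1 + q u) ^ 2 = c := by
  intro c hc hcq
  have h0 : (0 : ℝ) ∈ Icc (0 : ℝ) 1 := left_mem_Icc.2 zero_le_one
  have h1 : (1 : ℝ) ∈ Icc (0 : ℝ) 1 := right_mem_Icc.2 zero_le_one
  have hdiff : ∀ u ∈ Icc (0 : ℝ) 1, DifferentiableAt ℝ q u := fun u hu => (hq2 u hu).1
  have hq_pos : ∀ u ∈ Icc (0 : ℝ) 1, 0 < 1 + q u := fun u hu => by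
    have := hqc.concaveOn.min_le_of_mem_Icc h0 h1 hu
    rw [hq0, hq1, min_self] at this
    linarith
  have hd1 : deriv q 1 < 0 := not_le.1 fun h =>
    (hqc.lt_of_deriv_nonneg h0 h1 zero_lt_one (hdiff 1 h1) h).ne (hq0.trans hq1.symm)
  have hcont : ContinuousOn (fun u => deriv q u / (1 + q u) ^ 2) (Icc 0 1) :=
    ContinuousOn.div (fun u hu => (hq2 u hu).2.continuousAt.continuousWithinAt)
      ((continuousOn_const.add fun u hu => (hdiff u hu).continuousAt.continuousWithinAt).pow 2)
      fun u hu => (pow_pos (hq_pos u hu) 2).ne'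
  have hends : c ∈ Ioo (deriv q 1 / (1 + q 1) ^ 2) (deriv q 0 / (1 + q 0) ^ 2) := by
    simp only [hq0, hq1, add_zero, one_pow, div_one]
    exact ⟨hd1.trans hc, hcq⟩
  obtain ⟨u, hu, hgu⟩ := intermediate_value_Ioo' zero_le_one hcont hends
  have hmem : ∀ v ∈ Ioo (0 : ℝ) 1, deriv q v / (1 + q v) ^ 2 = c →
      v ∈ {x ∈ Icc (0 : ℝ) 1 | 0 < deriv q x} := fun v hv hgv =>
    ⟨Ioo_subset_Icc_self hv,
      (div_pos_iff_of_pos_right (pow_pos (hq_pos v (Ioo_subset_Icc_self hv)) 2)).1 (hgv ▸ hc)⟩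
  refine ⟨u, ⟨hu, hgu⟩, fun v ⟨hv, hgv⟩ => ?_⟩
  exact (hqc.strictAntiOn_deriv_div_one_add_sq hdiff hq_pos).injOn
    (hmem v hv hgv) (hmem u hu hgu) (hgv.trans hgu.symm)

/-- If `q` satisfies (A1)-(A3) and `q' 0 > 0`, then for every `0 < c < q' 0` there is a
unique `u ∈ (0,1)` with `q' u / (1 + q u)^2 = c`. -/
theorem exists_unique_ubar (q : ℝ → ℝ)
    (hq0 : q 0 = 0) (hq1 : q 1 = 0)
    (hq2 : ∀ u ∈ Set.Icc (0:ℝ) 1, DifferentiableAt ℝ q u ∧ DifferentiableAt ℝ (deriv q) u)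
    (hqc : StrictConcaveOn ℝ (Set.Icc (0:ℝ) 1) q)
    (hq'0 : 0 < deriv q 0) :
    ∀ c : ℝ, 0 < c → c < deriv q 0 →
      ∃! u : ℝ, u ∈ Set.Ioo (0:ℝ) 1 ∧ deriv q u / (1 + q u) ^ 2 = c :=
  exists_unique_ubar_general q hq0 hq1 hq2 hqc
end

section
/- Let q₁, …, q_m : ℝ → ℝ each satisfy (A1) q_i(0) = q_i(1) = 0, (A2) q_i is twice differentiable on [0,1], and (A3) q_i is strictly concave on [0,1], with h := min_i q_i'(0) > 0. For c ∈ (0, h) let ū_i(c) ∈ (0,1) be the unique solution of q_i'(u)/(1 + q_i(u))² = c, and let L(c) := min_i ū_i(c). Then L is strictly decreasing on (0, h). -/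
/-- If each `q i` satisfies (A1)-(A3) with `h := min_i (q i)' 0 > 0`, and for
`c ∈ (0, h)`, `ubar i c ∈ (0,1)` is the unique solution of
`(q i)' u / (1 + q i u)^2 = c`, then `L c := min_i (ubar i c)` is strictly
decreasing on `(0, h)`. -/
theorem L_strictAntiOn {ι : Type*} [Fintype ι] [Nonempty ι]
    (q : ι → ℝ → ℝ)
    (hq0 : ∀ i, q i 0 = 0) (hq1 : ∀ i, q i 1 = 0)
    (hq2 : ∀ i, ∀ u ∈ Set.Icc (0:ℝ) 1,
      DifferentiableAt ℝ (q i) u ∧ DifferentiableAt ℝ (deriv (q i)) u)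
    (hqc : ∀ i, StrictConcaveOn ℝ (Set.Icc (0:ℝ) 1) (q i))
    (h : ℝ)
    (hdef : h = Finset.univ.inf' Finset.univ_nonempty (fun i => deriv (q i) 0))
    (hpos : 0 < h)
    (ubar : ι → ℝ → ℝ)
    (hubar : ∀ i, ∀ c ∈ Set.Ioo (0:ℝ) h,
      ubar i c ∈ Set.Ioo (0:ℝ) 1 ∧
      deriv (q i) (ubar i c) / (1 + q i (ubar i c)) ^ 2 = c ∧
      ∀ u ∈ Set.Ioo (0:ℝ) 1, deriv (q i) u / (1 + q i u) ^ 2 = c → u = ubar i c)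
    (L : ℝ → ℝ)
    (hL : ∀ c, L c = Finset.univ.inf' Finset.univ_nonempty (fun i => ubar i c)) :
    StrictAntiOn L (Set.Ioo 0 h) := by
  -- derivative of each q i is strictly antitone on [0,1]
  have hanti : ∀ i, StrictAntiOn (deriv (q i)) (Set.Icc 0 1) :=
    fun i => (hqc i).strictAntiOn_deriv (fun x hx => (hq2 i x hx).1)
  -- q i is nonnegative on [0,1]
  have hqnn : ∀ i, ∀ u ∈ Set.Icc (0:ℝ) 1, 0 ≤ q i u := by
    intro i u hu
    rcases hu with ⟨hu0, hu1⟩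
    have := (hqc i).concaveOn.2 (Set.left_mem_Icc.2 one_pos.le)
      (Set.right_mem_Icc.2 one_pos.le) (sub_nonneg.2 hu1) hu0 (by ring)
    simpa [hq0 i, hq1 i] using this
  -- each ubar i is strictly antitone on (0,h)
  have hub : ∀ i, ∀ c1 ∈ Set.Ioo (0:ℝ) h, ∀ c2 ∈ Set.Ioo (0:ℝ) h,
      c1 < c2 → ubar i c2 < ubar i c1 := by
    intro i c1 hc1 c2 hc2 hlt
    by_contra hle
    push_neg at hle
    obtain ⟨hu1, he1, -⟩ := hubar i c1 hc1
    obtain ⟨hu2, he2, -⟩ := hubar i c2 hc2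
    set u1 := ubar i c1 with hu1def
    set u2 := ubar i c2 with hu2def
    have hu1m : u1 ∈ Set.Icc (0:ℝ) 1 := ⟨hu1.1.le, hu1.2.le⟩
    have hu2m : u2 ∈ Set.Icc (0:ℝ) 1 := ⟨hu2.1.le, hu2.2.le⟩
    have hq1nn : 0 ≤ q i u1 := hqnn i u1 hu1m
    have hq2nn : 0 ≤ q i u2 := hqnn i u2 hu2m
    have hd1pos : (0:ℝ) < (1 + q i u1) ^ 2 := by positivity
    have hd2pos : (0:ℝ) < (1 + q i u2) ^ 2 := by positivity
    -- deriv q i u2 > 0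
    have hder2 : 0 < deriv (q i) u2 := by
      have : 0 < deriv (q i) u2 / (1 + q i u2) ^ 2 := he2 ▸ hc2.1
      exact (div_pos_iff_of_pos_right hd2pos).1 this
    -- deriv q i u1 ≥ deriv q i u2
    have hder12 : deriv (q i) u2 ≤ deriv (q i) u1 := by
      rcases eq_or_lt_of_le hle with heq | hltu
      · rw [heq]
      · exact (hanti i hu1m hu2m hltu).le
    -- q is monotone on [u1, u2]
    have hmono : MonotoneOn (q i) (Set.Icc u1 u2) := by
      have hsub : Set.Icc u1 u2 ⊆ Set.Icc (0:ℝ) 1 :=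
        Set.Icc_subset_Icc hu1.1.le hu2.2.le
      apply monotoneOn_of_deriv_nonneg (convex_Icc u1 u2)
      · intro x hx
        exact ((hq2 i x (hsub hx)).1).continuousAt.continuousWithinAt
      · intro x hx
        rw [interior_Icc] at hx
        exact ((hq2 i x (hsub (Set.Ioo_subset_Icc_self hx))).1).differentiableWithinAt
      · intro x hx
        rw [interior_Icc] at hx
        have hxm : x ∈ Set.Icc (0:ℝ) 1 := hsub (Set.Ioo_subset_Icc_self hx)
        exact le_of_lt (hder2.trans (hanti i hxm hu2m hx.2))
    have hq12 : q i u1 ≤ q i u2 :=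
      hmono (Set.left_mem_Icc.2 hle) (Set.right_mem_Icc.2 hle) hle
    have hd12 : (1 + q i u1) ^ 2 ≤ (1 + q i u2) ^ 2 :=
      pow_le_pow_left₀ (by linarith) (by linarith) 2
    have : c2 ≤ c1 := by
      rw [← he1, ← he2]
      exact div_le_div₀ (le_of_lt (hder2.trans_le hder12)) hder12 hd1pos hd12
    exact absurd hlt (not_lt.2 this)
  -- conclude for L
  intro c1 hc1 c2 hc2 hlt
  rw [hL c1, hL c2]
  obtain ⟨j, -, hj⟩ := Finset.exists_mem_eq_inf' Finset.univ_nonempty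
    (fun i => ubar i c1)
  rw [hj]
  calc Finset.univ.inf' Finset.univ_nonempty (fun i => ubar i c2) ≤ ubar j c2 :=
        Finset.inf'_le _ (Finset.mem_univ j)
    _ < ubar j c1 := hub j c1 hc1 c2 hc2 hlt
end

section
/- Let M = {1,…,m} and W = {1,…,n} be finite sets, w : M × W → [0,1], and for each i ∈ M let q_i satisfy (A1) q_i(0) = q_i(1) = 0, (A2) q_i twice differentiable on [0,1], (A3) q_i strictly concave on [0,1], with π_i(u) = q_i(u)/(1 + q_i(u)). Call x : M × W → ℝ feasible if x ≥ 0, ∑_{j∈W} x_{ij} ≤ 1 for all i, and ∑_{i∈M} x_{ij} ≤ 1 for all j; write u_i(x) = ∑_{j∈W} w_{ij} x_{ij}. Let x* be feasible and maximize ∑_i u_i(x) over feasible x, and let x̂ be feasible and maximize ∑_i π_i(u_i(x)) over feasible x; write u*_i = u_i(x*) and û_i = u_i(x̂). Then for every c > 0, letting S(c) = {i ∈ M : π_i'(û_i) > c}, one has ∑_{i∈M} u*_i ≤ (1/c)·∑_{i∈S(c)} ∑_{j∈W} π_i'(û_i)·w_{ij}·x̂_{ij} + ∑_{i∈M∖S(c)}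 (u*_i + û_i). -/
/-!
The selfish optimum `x̂` maximizes `∑ i, π i (u i)` over the image of the convex set of fractional
matchings, so the directional derivative there towards any other feasible utility vector is
nonpositive: `∑ i, π_i'(û_i) (u_i(y) - û_i) ≤ 0`. Take for `y` the fair optimum `x*` with the rows
outside `S(c)` deleted. Then `c ∑_{S(c)} u*_i ≤ ∑_{S(c)} π_i'(û_i) u*_i ≤ ∑_i π_i'(û_i) û_i`, and
the weights off `S(c)` are at most `c`, which rearranges to the claim.
-/

open Set Finset

theorem ConcaveOn.nonneg_of_nonneg_endpoints {f : ℝ → ℝ} {a b : ℝ}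
    (hf : ConcaveOn ℝ (Icc a b) f) (ha : 0 ≤ f a) (hb : 0 ≤ f b) {x : ℝ} (hx : x ∈ Icc a b) :
    0 ≤ f x := by
  have hab : a ≤ b := hx.1.trans hx.2
  exact (le_min ha hb).trans <| hf.ge_on_segment (left_mem_Icc.2 hab) (right_mem_Icc.2 hab)
    (by rwa [segment_eq_Icc hab])

theorem sum_mul_sub_nonpos_of_isMaxOn {ι : Type*} [Fintype ι] {φ : ι → ℝ → ℝ} {d : ι → ℝ}
    {A : Set (ι → ℝ)} {a b : ι → ℝ} (hA : Convex ℝ A) (ha : a ∈ A) (hb : b ∈ A)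
    (hmax : IsMaxOn (fun u => ∑ i, φ i (u i)) A a) (hφ : ∀ i, HasDerivAt (φ i) (d i) (a i)) :
    ∑ i, d i * (b i - a i) ≤ 0 := by
  have hderiv : HasFDerivAt (fun u => ∑ i, φ i (u i))
      (∑ i, d i • ContinuousLinearMap.proj (R := ℝ) (φ := fun _ : ι => ℝ) i) a :=
    HasFDerivAt.fun_sum fun i _ => (hφ i).comp_hasFDerivAt a (hasFDerivAt_apply i a)
  simpa using hmax.localize.hasFDerivWithinAt_nonpos hderiv.hasFDerivWithinAt
    (sub_mem_posTangentConeAt_of_segment_subset (hA.segment_subset ha hb))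

theorem sum_le_of_weighted_sum_le {ι : Type*} [Fintype ι] [DecidableEq ι] {S : Finset ι}
    {c : ℝ} {d a b : ι → ℝ} (hc : 0 < c) (hS : ∀ i ∈ S, c ≤ d i) (hSc : ∀ i ∉ S, d i ≤ c)
    (ha : ∀ i, 0 ≤ a i) (hb : ∀ i, 0 ≤ b i) (h : ∑ i ∈ S, d i * a i ≤ ∑ i, d i * b i) :
    ∑ i, a i ≤ (1 / c) * ∑ i ∈ S, d i * b i + ∑ i ∈ Sᶜ, (a i + b i) := by
  have hweighted : c * ∑ i ∈ S, a i ≤ ∑ i ∈ S, d i * b i + c * ∑ i ∈ Sᶜ, b i :=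
    calc c * ∑ i ∈ S, a i ≤ ∑ i ∈ S, d i * a i := by
          rw [mul_sum]
          exact sum_le_sum fun i hi => mul_le_mul_of_nonneg_right (hS i hi) (ha i)
      _ ≤ ∑ i, d i * b i := h
      _ = ∑ i ∈ S, d i * b i + ∑ i ∈ Sᶜ, d i * b i := (sum_add_sum_compl S _).symm
      _ ≤ ∑ i ∈ S, d i * b i + c * ∑ i ∈ Sᶜ, b i := by
          rw [mul_sum]
          exact add_le_add le_rfl (sum_le_sum fun i hi =>
            mul_le_mul_of_nonneg_right (hSc i (mem_compl.1 hi)) (hb i))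
  have hscaled : ∑ i ∈ S, a i ≤ (1 / c) * ∑ i ∈ S, d i * b i + ∑ i ∈ Sᶜ, b i := by
    rw [one_div_mul_eq_div, div_add' _ _ _ hc.ne', le_div_iff₀ hc]
    linarith
  have hcompl : 0 ≤ ∑ i ∈ Sᶜ, a i := sum_nonneg fun i _ => ha i
  rw [← sum_add_sum_compl S a, sum_add_distrib]
  linarith

section Matching

variable {ι κ : Type*} [Fintype κ]

def IsFractionalMatching [Fintype ι] (x : ι → κ → ℝ) : Prop :=
  (∀ i j, 0 ≤ x i j) ∧ (∀ i, ∑ j, x i j ≤ 1) ∧ (∀ j, ∑ i, x i j ≤ 1)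

theorem convex_setOf_isFractionalMatching [Fintype ι] :
    Convex ℝ {x : ι → κ → ℝ | IsFractionalMatching x} := by
  rintro x ⟨hx0, hxr, hxc⟩ y ⟨hy0, hyr, hyc⟩ s t hs ht hst
  refine ⟨fun i j => ?_, fun i => ?_, fun j => ?_⟩
  · simp only [Pi.add_apply, Pi.smul_apply, smul_eq_mul]
    exact add_nonneg (mul_nonneg hs (hx0 i j)) (mul_nonneg ht (hy0 i j))
  · simp only [Pi.add_apply, Pi.smul_apply, smul_eq_mul, sum_add_distrib, ← mul_sum]
    nlinarith [hxr i, hyr i]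
  · simp only [Pi.add_apply, Pi.smul_apply, smul_eq_mul, sum_add_distrib, ← mul_sum]
    nlinarith [hxc j, hyc j]

theorem IsFractionalMatching.of_le [Fintype ι] {x y : ι → κ → ℝ} (hx : IsFractionalMatching x)
    (hy0 : ∀ i j, 0 ≤ y i j) (hyx : ∀ i j, y i j ≤ x i j) : IsFractionalMatching y :=
  ⟨hy0, fun i => (sum_le_sum fun j _ => hyx i j).trans (hx.2.1 i),
    fun j => (sum_le_sum fun i _ => hyx i j).trans (hx.2.2 j)⟩

def utilityMap (w : ι → κ → ℝ) : (ι → κ → ℝ) →ₗ[ℝ] ι → ℝ where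
  toFun x i := ∑ j, w i j * x i j
  map_add' x y := by ext i; simp [mul_add, sum_add_distrib]
  map_smul' r x := by ext i; simp [mul_sum, mul_left_comm]

@[simp]
theorem utilityMap_apply (w x : ι → κ → ℝ) (i : ι) :
    utilityMap w x i = ∑ j, w i j * x i j := rfl

theorem utilityMap_mem_Icc [Fintype ι] {w x : ι → κ → ℝ} (hw : ∀ i j, w i j ∈ Icc (0 : ℝ) 1)
    (hx : IsFractionalMatching x) (i : ι) : utilityMap w x i ∈ Icc (0 : ℝ) 1 :=
  ⟨sum_nonneg fun j _ => mul_nonneg (hw i j).1 (hx.1 i j),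
    (sum_le_sum fun j _ => mul_le_of_le_one_left (hx.1 i j) (hw i j).2).trans (hx.2.1 i)⟩

theorem IsFractionalMatching.ite_mem [Fintype ι] [DecidableEq ι] {x : ι → κ → ℝ} (hx : IsFractionalMatching x)
    (S : Finset ι) : IsFractionalMatching fun i j => if i ∈ S then x i j else 0 :=
  hx.of_le (fun i j => by split_ifs <;> simp [hx.1 i j])
    (fun i j => by split_ifs <;> simp [hx.1 i j])

theorem utilityMap_ite_mem [DecidableEq ι] (w x : ι → κ → ℝ) (S : Finset ι) (i : ι) :
    utilityMap w (fun i j => if i ∈ S then x i j else 0) i =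
      if i ∈ S then utilityMap w x i else 0 := by
  split_ifs with hi <;> simp [hi]

theorem IsFractionalMatching.sum_mul_utilityMap_le_of_isMax [Fintype ι] {w x y : ι → κ → ℝ}
    {φ : ι → ℝ → ℝ} {d : ι → ℝ} (hx : IsFractionalMatching x) (hy : IsFractionalMatching y)
    (hmax : ∀ z, IsFractionalMatching z →
      ∑ i, φ i (utilityMap w z i) ≤ ∑ i, φ i (utilityMap w x i))
    (hd : ∀ i, HasDerivAt (φ i) (d i) (utilityMap w x i)) :
    ∑ i, d i * utilityMap w y i ≤ ∑ i, d i * utilityMap w x i := by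
  have hfoc := sum_mul_sub_nonpos_of_isMaxOn
    (convex_setOf_isFractionalMatching.linear_image (utilityMap w))
    (mem_image_of_mem _ hx) (mem_image_of_mem _ hy) (isMaxOn_iff.2 <| forall_mem_image.2 hmax) hd
  simp only [mul_sub, sum_sub_distrib] at hfoc
  linarith

end Matching

open Classical in
theorem claim2_general {ι κ : Type*} [Fintype ι] [Fintype κ]
    (w : ι → κ → ℝ) (hw : ∀ i j, w i j ∈ Set.Icc (0:ℝ) 1)
    (q : ι → ℝ → ℝ)
    (hq0 : ∀ i, q i 0 = 0) (hq1 : ∀ i, q i 1 = 0)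
    (hq2 : ∀ i, ∀ u ∈ Set.Icc (0:ℝ) 1,
      DifferentiableAt ℝ (q i) u ∧ DifferentiableAt ℝ (deriv (q i)) u)
    (hqc : ∀ i, StrictConcaveOn ℝ (Set.Icc (0:ℝ) 1) (q i))
    (π : ι → ℝ → ℝ) (hπ : ∀ i u, π i u = q i u / (1 + q i u))
    (feasible : (ι → κ → ℝ) → Prop)
    (hfeasible : ∀ x, feasible x ↔
      (∀ i j, 0 ≤ x i j) ∧ (∀ i, ∑ j, x i j ≤ 1) ∧ (∀ j, ∑ i, x i j ≤ 1))
    (util : (ι → κ → ℝ) → ι → ℝ)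
    (hutil : ∀ x i, util x i = ∑ j, w i j * x i j)
    (xstar : ι → κ → ℝ) (hxstar_feas : feasible xstar)
    (xhat : ι → κ → ℝ) (hxhat_feas : feasible xhat)
    (hxhat_opt : ∀ x, feasible x → ∑ i, π i (util x i) ≤ ∑ i, π i (util xhat i))
    (ustar uhat : ι → ℝ)
    (hustar : ∀ i, ustar i = util xstar i) (huhat : ∀ i, uhat i = util xhat i) :
    ∀ c : ℝ, 0 < c →
      ∑ i, ustar i ≤
        (1 / c) * ∑ i ∈ Finset.univ.filter (fun i => c < deriv (π i) (uhat i)),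
            ∑ j, deriv (π i) (uhat i) * w i j * xhat i j
        + ∑ i ∈ (Finset.univ.filter (fun i => c < deriv (π i) (uhat i)))ᶜ,
            (ustar i + uhat i) := by
  intro c hc
  obtain rfl : feasible = IsFractionalMatching := funext fun x => propext (hfeasible x)
  obtain rfl : util = utilityMap w := funext fun x => funext (hutil x)
  obtain rfl : ustar = utilityMap w xstar := funext hustar
  obtain rfl : uhat = utilityMap w xhat := funext huhat
  set d : ι → ℝ := fun i => deriv (π i) (utilityMap w xhat i)
  set S := univ.filter fun i => c < d i
  have hd : ∀ i, HasDerivAt (π i) (d i) (utilityMap w xhat i) := fun i => by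
    have hu := utilityMap_mem_Icc hw hxhat_feas i
    have hq_nonneg := (hqc i).concaveOn.nonneg_of_nonneg_endpoints (hq0 i).ge (hq1 i).ge hu
    have hqd := (hq2 i _ hu).1
    have hπd : DifferentiableAt ℝ (π i) (utilityMap w xhat i) := by
      rw [funext (hπ i)]
      exact hqd.fun_div (hqd.const_add 1) (by positivity)
    exact hπd.hasDerivAt
  have hrestrict : ∑ i ∈ S, d i * utilityMap w xstar i ≤ ∑ i, d i * utilityMap w xhat i := by
    have := hxhat_feas.sum_mul_utilityMap_le_of_isMax (hxstar_feas.ite_mem S) hxhat_opt hd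
    simpa only [utilityMap_ite_mem, mul_ite, mul_zero, Fintype.sum_ite_mem] using this
  simp only [mul_assoc, ← mul_sum]
  exact sum_le_of_weighted_sum_le hc (fun i hi => (mem_filter.1 hi).2.le)
    (fun i hi => not_lt.1 fun h => hi (mem_filter.2 ⟨mem_univ i, h⟩))
    (fun i => (utilityMap_mem_Icc hw hxstar_feas i).1)
    (fun i => (utilityMap_mem_Icc hw hxhat_feas i).1) hrestrict

open Classical in
/-- Claim 2 from the proof of Theorem 1. With `xstar` a fair-optimal feasible matching
and `xhat` a selfish-optimal feasible matching, for every `c > 0`, letting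
`S c = {i : π_i'(uhat i) > c}`,
`∑ i, ustar i ≤ (1/c) * ∑_{i ∈ S c} ∑_j π_i'(uhat i) * w i j * xhat i j
  + ∑_{i ∉ S c} (ustar i + uhat i)`. -/
theorem claim2 {ι κ : Type*} [Fintype ι] [Fintype κ]
    (w : ι → κ → ℝ) (hw : ∀ i j, w i j ∈ Set.Icc (0:ℝ) 1)
    (q : ι → ℝ → ℝ)
    (hq0 : ∀ i, q i 0 = 0) (hq1 : ∀ i, q i 1 = 0)
    (hq2 : ∀ i, ∀ u ∈ Set.Icc (0:ℝ) 1,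
      DifferentiableAt ℝ (q i) u ∧ DifferentiableAt ℝ (deriv (q i)) u)
    (hqc : ∀ i, StrictConcaveOn ℝ (Set.Icc (0:ℝ) 1) (q i))
    (π : ι → ℝ → ℝ) (hπ : ∀ i u, π i u = q i u / (1 + q i u))
    (feasible : (ι → κ → ℝ) → Prop)
    (hfeasible : ∀ x, feasible x ↔
      (∀ i j, 0 ≤ x i j) ∧ (∀ i, ∑ j, x i j ≤ 1) ∧ (∀ j, ∑ i, x i j ≤ 1))
    (util : (ι → κ → ℝ) → ι → ℝ)
    (hutil : ∀ x i, util x i = ∑ j, w i j * x i j)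
    (xstar : ι → κ → ℝ) (hxstar_feas : feasible xstar)
    (hxstar_opt : ∀ x, feasible x → ∑ i, util x i ≤ ∑ i, util xstar i)
    (xhat : ι → κ → ℝ) (hxhat_feas : feasible xhat)
    (hxhat_opt : ∀ x, feasible x → ∑ i, π i (util x i) ≤ ∑ i, π i (util xhat i))
    (ustar uhat : ι → ℝ)
    (hustar : ∀ i, ustar i = util xstar i) (huhat : ∀ i, uhat i = util xhat i) :
    ∀ c : ℝ, 0 < c →
      ∑ i, ustar i ≤
        (1 / c) * ∑ i ∈ Finset.univ.filter (fun i => c < deriv (π i) (uhat i)),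
            ∑ j, deriv (π i) (uhat i) * w i j * xhat i j
        + ∑ i ∈ (Finset.univ.filter (fun i => c < deriv (π i) (uhat i)))ᶜ,
            (ustar i + uhat i) :=
  claim2_general w hw q hq0 hq1 hq2 hqc π hπ feasible hfeasible util hutil xstar hxstar_feas xhat
    hxhat_feas hxhat_opt ustar uhat hustar huhat
end

section
/- (Theorem 1, Price of Anarchy bound.) Let M = {1,…,m} and W = {1,…,n} be finite sets, w : M × W → [0,1], and for each i ∈ M let q_i satisfy (A1) q_i(0) = q_i(1) = 0, (A2) q_i twice differentiable on [0,1], (A3) q_i strictly concave on [0,1], with h := min_i q_i'(0) > 0 and H := max_i q_i'(0); set π_i(u) = q_i(u)/(1 + q_i(u)). For c ∈ (0,h) let ū_i(c) ∈ (0,1) be the unique solution of q_i'(u)/(1 + q_i(u))² = c and L(c) := min_i ū_i(c), and let c* ∈ (0,h) be the unique solution of c = (H/2)·L(c). Call x : M × W → ℝ feasible if x ≥ 0 with all row sums and column sums at most 1, and write u_i(x) = ∑_{j∈W} w_{ij} x_{ij}. If x* is feasible and maximizes ∑_i u_i(x) over feasible x, and x̂ is feasible and maximizes ∑_i π_i(u_i(x))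 over feasible x, then ∑_i u_i(x̂) ≥ (L(c*)/2)·∑_i u_i(x*). -/
/-!
Write `c = c*`, `û = u(x̂)` and `P i = π_i'(û i)`. Since `π_i` is concave, `π_i'` is decreasing on
`[0, 1]` with `π_i'(ū_i(c)) = c`, so `P i ≤ c` when `ū_i(c) ≤ û i` and
`c ≤ P i ≤ π_i'(0) = q_i'(0) ≤ H` otherwise. Let `x̃` be `x*` with the rows of the first kind of
agents deleted. In both cases `c u_i(x*) ≤ (H - P i) û i + P i u_i(x̃)`, using
`c = (H/2) L(c) ≤ (H/2) û i` in the first case. Summing, the first-order condition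
`∑ P i (u_i(x̃) - û i) ≤ 0` for the maximizer `x̂` over the convex set of feasible matchings gives
`c ∑ u_i(x*) ≤ H ∑ û i`, and `c / H = L(c) / 2`.
-/

open Set

lemma concaveOn_div_one_add_s9 {E : Type*} [AddCommGroup E] [Module ℝ E] {s : Set E} {g : E → ℝ}
    (hg : ConcaveOn ℝ s g) (hg0 : ∀ x ∈ s, 0 ≤ g x) :
    ConcaveOn ℝ s (fun x => g x / (1 + g x)) := by
  refine ⟨hg.1, fun x hx y hy a b ha hb hab => ?_⟩
  have hx0 := hg0 x hx
  have hy0 := hg0 y hy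
  have hz0 := hg0 _ (hg.1 hx hy ha hb hab)
  have hmid : a * g x + b * g y ≤ g (a • x + b • y) := hg.2 hx hy ha hb hab
  obtain rfl : b = 1 - a := by linarith
  simp only [smul_eq_mul]
  -- `t ↦ t / (1 + t)` is concave and increasing on `[0, ∞)`
  calc a * (g x / (1 + g x)) + (1 - a) * (g y / (1 + g y))
      ≤ (a * g x + (1 - a) * g y) / (1 + (a * g x + (1 - a) * g y)) := by
        rw [← sub_nonneg]
        have hdiff : (a * g x + (1 - a) * g y) / (1 + (a * g x + (1 - a) * g y))
            - (a * (g x / (1 + g x)) + (1 - a) * (g y / (1 + g y)))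
            = a * (1 - a) * (g x - g y) ^ 2
              / ((1 + (a * g x + (1 - a) * g y)) * (1 + g x) * (1 + g y)) := by
          field_simp
          ring
        rw [hdiff]
        positivity
    _ ≤ g (a • x + (1 - a) • y) / (1 + g (a • x + (1 - a) • y)) := by
        rw [div_le_div_iff₀ (by positivity) (by positivity)]
        nlinarith

lemma hasDerivAt_div_one_add {g : ℝ → ℝ} {g' x : ℝ} (hg : HasDerivAt g g' x)
    (hx : 1 + g x ≠ 0) :
    HasDerivAt (fun y => g y / (1 + g y)) (g' / (1 + g x) ^ 2) x :=
  (hg.fun_div (hg.const_add 1) hx).congr_deriv (by ring)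

lemma nonneg_of_concaveOn_Icc {g : ℝ → ℝ} {a b : ℝ} (hg : ConcaveOn ℝ (Icc a b) g)
    (ha : 0 ≤ g a) (hb : 0 ≤ g b) : ∀ x ∈ Icc a b, 0 ≤ g x := fun x hx => by
  have hab : a ≤ b := hx.1.trans hx.2
  exact le_min ha hb |>.trans <| hg.ge_on_segment (left_mem_Icc.2 hab) (right_mem_Icc.2 hab)
    (by rwa [segment_eq_Icc hab])

noncomputable def marginalPayoff (q : ℝ → ℝ) (u : ℝ) : ℝ := deriv q u / (1 + q u) ^ 2

lemma hasDerivAt_payoff {q : ℝ → ℝ} (hq : ConcaveOn ℝ (Icc 0 1) q) (h0 : q 0 = 0) (h1 : q 1 = 0)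
    {u : ℝ} (hu : u ∈ Icc (0 : ℝ) 1) (hdu : DifferentiableAt ℝ q u) :
    HasDerivAt (fun u => q u / (1 + q u)) (marginalPayoff q u) u :=
  hasDerivAt_div_one_add hdu.hasDerivAt (by linarith [nonneg_of_concaveOn_Icc hq h0.ge h1.ge u hu])

lemma antitoneOn_marginalPayoff {q : ℝ → ℝ} (hq : ConcaveOn ℝ (Icc 0 1) q) (h0 : q 0 = 0)
    (h1 : q 1 = 0) (hd : ∀ u ∈ Icc (0 : ℝ) 1, DifferentiableAt ℝ q u) :
    AntitoneOn (marginalPayoff q) (Icc 0 1) := by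
  have hpay := fun u hu => hasDerivAt_payoff hq h0 h1 hu (hd u hu)
  intro x hx y hy hxy
  have := (concaveOn_div_one_add_s9 hq (nonneg_of_concaveOn_Icc hq h0.ge h1.ge)).antitoneOn_deriv
    (fun z hz => (hpay z hz).differentiableAt) hx hy hxy
  rwa [(hpay x hx).deriv, (hpay y hy).deriv] at this

lemma sum_deriv_mul_sub_nonpos_of_isMaxOn {ι : Type*} [Fintype ι] {f : ι → ℝ → ℝ}
    {f' : ι → ℝ} {U : Set (ι → ℝ)} {a b : ι → ℝ} (hU : Convex ℝ U) (ha : a ∈ U) (hb : b ∈ U)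
    (hmax : IsMaxOn (fun v => ∑ i, f i (v i)) U a) (hf : ∀ i, HasDerivAt (f i) (f' i) (a i)) :
    ∑ i, f' i * (b i - a i) ≤ 0 := by
  have hF : HasFDerivAt (fun v : ι → ℝ => ∑ i, f i (v i))
      (∑ i, f' i • ContinuousLinearMap.proj (R := ℝ) (φ := fun _ : ι => ℝ) i) a :=
    HasFDerivAt.fun_sum fun i _ => (hf i).comp_hasFDerivAt a (hasFDerivAt_apply i a)
  have := hmax.localize.hasFDerivWithinAt_nonpos hF.hasFDerivWithinAt
    (sub_mem_posTangentConeAt_of_segment_subset (hU.segment_subset ha hb))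
  simpa [mul_comm] using this

lemma mul_sum_le_mul_sum_of_isMaxOn {ι : Type*} [Fintype ι] {f : ι → ℝ → ℝ} {f' : ι → ℝ}
    {U : Set (ι → ℝ)} {a b v : ι → ℝ} {c H : ℝ} (hU : Convex ℝ U) (ha : a ∈ U) (hb : b ∈ U)
    (hmax : IsMaxOn (fun v => ∑ i, f i (v i)) U a) (hf : ∀ i, HasDerivAt (f i) (f' i) (a i))
    (hle : ∀ i, c * v i ≤ (H - f' i) * a i + f' i * b i) :
    c * ∑ i, v i ≤ H * ∑ i, a i := by
  have hfoc := sum_deriv_mul_sub_nonpos_of_isMaxOn hU ha hb hmax hf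
  calc c * ∑ i, v i ≤ ∑ i, ((H - f' i) * a i + f' i * b i) := by
        rw [Finset.mul_sum]; exact Finset.sum_le_sum fun i _ => hle i
    _ = H * ∑ i, a i + ∑ i, f' i * (b i - a i) := by
        rw [Finset.mul_sum, ← Finset.sum_add_distrib]; congr 1; ext i; ring
    _ ≤ H * ∑ i, a i := by linarith

def fractionalMatchings (ι κ : Type*) [Fintype ι] [Fintype κ] : Set (ι → κ → ℝ) :=
  {x | (∀ i j, 0 ≤ x i j) ∧ (∀ i, ∑ j, x i j ≤ 1) ∧ (∀ j, ∑ i, x i j ≤ 1)}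

section Matching

variable {ι κ : Type*} [Fintype κ]

lemma convex_fractionalMatchings [Fintype ι] : Convex ℝ (fractionalMatchings ι κ) := by
  rintro x ⟨hx0, hxr, hxc⟩ y ⟨hy0, hyr, hyc⟩ a b ha hb hab
  refine ⟨fun i j => ?_, fun i => ?_, fun j => ?_⟩
  · simp only [Pi.add_apply, Pi.smul_apply, smul_eq_mul]
    have := hx0 i j; have := hy0 i j
    positivity
  · simp only [Pi.add_apply, Pi.smul_apply, smul_eq_mul, Finset.sum_add_distrib,
      ← Finset.mul_sum]
    nlinarith [hxr i, hyr i]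
  · simp only [Pi.add_apply, Pi.smul_apply, smul_eq_mul, Finset.sum_add_distrib,
      ← Finset.mul_sum]
    nlinarith [hxc j, hyc j]

lemma mem_fractionalMatchings_of_le [Fintype ι] {x y : ι → κ → ℝ}
    (hx : x ∈ fractionalMatchings ι κ) (hy0 : ∀ i j, 0 ≤ y i j) (hyx : ∀ i j, y i j ≤ x i j) :
    y ∈ fractionalMatchings ι κ :=
  ⟨hy0, fun i => (Finset.sum_le_sum fun j _ => hyx i j).trans (hx.2.1 i),
    fun j => (Finset.sum_le_sum fun i _ => hyx i j).trans (hx.2.2 j)⟩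

def weightedRowSums (w : ι → κ → ℝ) : (ι → κ → ℝ) →ₗ[ℝ] ι → ℝ where
  toFun x i := ∑ j, w i j * x i j
  map_add' x y := by ext i; simp [mul_add, Finset.sum_add_distrib]
  map_smul' a x := by ext i; simp [Finset.mul_sum, mul_left_comm]

@[simp]
lemma weightedRowSums_apply (w x : ι → κ → ℝ) (i : ι) :
    weightedRowSums w x i = ∑ j, w i j * x i j := rfl

lemma weightedRowSums_mem_Icc [Fintype ι] {w x : ι → κ → ℝ} (hw : ∀ i j, w i j ∈ Icc (0 : ℝ) 1)
    (hx : x ∈ fractionalMatchings ι κ) (i : ι) : weightedRowSums w x i ∈ Icc (0 : ℝ) 1 := by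
  refine ⟨Finset.sum_nonneg fun j _ => mul_nonneg (hw i j).1 (hx.1 i j), ?_⟩
  calc ∑ j, w i j * x i j ≤ ∑ j, x i j :=
        Finset.sum_le_sum fun j _ => mul_le_of_le_one_left (hx.1 i j) (hw i j).2
    _ ≤ 1 := hx.2.1 i

lemma ite_zero_mem_image_weightedRowSums [Fintype ι] {w x : ι → κ → ℝ}
    (hx : x ∈ fractionalMatchings ι κ) (p : ι → Prop) [DecidablePred p] :
    (fun i => if p i then 0 else weightedRowSums w x i)
      ∈ weightedRowSums w '' fractionalMatchings ι κ := by
  refine ⟨fun i j => if p i then 0 else x i j, mem_fractionalMatchings_of_le hx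
    (fun i j => ?_) (fun i j => ?_), funext fun i => ?_⟩ <;> by_cases hp : p i <;> simp [hp, hx.1]

end Matching

lemma mul_le_of_antitoneOn {ρ : ℝ → ℝ} {c H L ubar uhat ustar : ℝ}
    (hρ : AntitoneOn ρ (Icc 0 1)) (hρ0 : ρ 0 ≤ H) (hρc : ρ ubar = c) (hc : 0 ≤ c)
    (hceq : c = H / 2 * L) (hL1 : L ≤ 1) (hLu : L ≤ ubar) (hubar : ubar ∈ Icc (0 : ℝ) 1)
    (huhat : uhat ∈ Icc (0 : ℝ) 1) (hustar : ustar ∈ Icc (0 : ℝ) 1) :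
    c * ustar ≤ (H - ρ uhat) * uhat + ρ uhat * (if ubar ≤ uhat then 0 else ustar) := by
  have h0 : (0 : ℝ) ∈ Icc 0 1 := left_mem_Icc.2 zero_le_one
  have hPH : ρ uhat ≤ H := (hρ h0 huhat huhat.1).trans hρ0
  have hH : 0 ≤ H := hc.trans (hρc ▸ (hρ h0 hubar hubar.1).trans hρ0)
  split_ifs with hA
  · have hP : ρ uhat ≤ c := hρc ▸ hρ hubar huhat hA
    have : c ≤ H / 2 * uhat := hceq ▸ mul_le_mul_of_nonneg_left (hLu.trans hA) (by positivity)
    have : ρ uhat ≤ H / 2 := hP.trans (hceq ▸ mul_le_of_le_one_right (by positivity) hL1)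
    nlinarith [hustar.2, huhat.1]
  · have hP : c ≤ ρ uhat := hρc ▸ hρ huhat hubar (not_le.mp hA).le
    nlinarith [hustar.1, huhat.1]

theorem price_of_anarchy_bound_general {ι κ : Type*} [Fintype ι] [Fintype κ] [Nonempty ι]
    (w : ι → κ → ℝ) (hw : ∀ i j, w i j ∈ Set.Icc (0:ℝ) 1)
    (q : ι → ℝ → ℝ)
    (hq0 : ∀ i, q i 0 = 0) (hq1 : ∀ i, q i 1 = 0)
    (hq2 : ∀ i, ∀ u ∈ Set.Icc (0:ℝ) 1,
      DifferentiableAt ℝ (q i) u ∧ DifferentiableAt ℝ (deriv (q i)) u)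
    (hqc : ∀ i, StrictConcaveOn ℝ (Set.Icc (0:ℝ) 1) (q i))
    (h H : ℝ)
    (hHdef : H = Finset.univ.sup' Finset.univ_nonempty (fun i => deriv (q i) 0))
    (π : ι → ℝ → ℝ) (hπ : ∀ i u, π i u = q i u / (1 + q i u))
    (ubar : ι → ℝ → ℝ)
    (hubar : ∀ i, ∀ c ∈ Set.Ioo (0:ℝ) h,
      ubar i c ∈ Set.Ioo (0:ℝ) 1 ∧
      deriv (q i) (ubar i c) / (1 + q i (ubar i c)) ^ 2 = c ∧
      ∀ u ∈ Set.Ioo (0:ℝ) 1, deriv (q i) u / (1 + q i u) ^ 2 = c → u = ubar i c)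
    (L : ℝ → ℝ)
    (hL : ∀ c, L c = Finset.univ.inf' Finset.univ_nonempty (fun i => ubar i c))
    (cstar : ℝ) (hcstar : cstar ∈ Set.Ioo (0:ℝ) h) (hceq : cstar = H / 2 * L cstar)
    (feasible : (ι → κ → ℝ) → Prop)
    (hfeasible : ∀ x, feasible x ↔
      (∀ i j, 0 ≤ x i j) ∧ (∀ i, ∑ j, x i j ≤ 1) ∧ (∀ j, ∑ i, x i j ≤ 1))
    (util : (ι → κ → ℝ) → ι → ℝ)
    (hutil : ∀ x i, util x i = ∑ j, w i j * x i j)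
    (xstar : ι → κ → ℝ) (hxstar_feas : feasible xstar)
    (xhat : ι → κ → ℝ) (hxhat_feas : feasible xhat)
    (hxhat_opt : ∀ x, feasible x → ∑ i, π i (util x i) ≤ ∑ i, π i (util xhat i)) :
    ∑ i, util xhat i ≥ L cstar / 2 * ∑ i, util xstar i := by
  obtain rfl : util = fun x => weightedRowSums w x := funext₂ hutil
  obtain rfl : π = fun i u => q i u / (1 + q i u) := funext₂ hπ
  obtain rfl : feasible = (· ∈ fractionalMatchings ι κ) := funext fun x => propext (hfeasible x)
  set c := cstar
  set uhat := weightedRowSums w xhat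
  have hqd : ∀ i, ∀ u ∈ Icc (0 : ℝ) 1, DifferentiableAt ℝ (q i) u := fun i u hu => (hq2 i u hu).1
  have hmono := fun i => antitoneOn_marginalPayoff (hqc i).concaveOn (hq0 i) (hq1 i) (hqd i)
  have huhat : ∀ i, uhat i ∈ Icc (0 : ℝ) 1 := weightedRowSums_mem_Icc hw hxhat_feas
  have hL_le : ∀ i, L c ≤ ubar i c := fun i => hL c ▸ Finset.inf'_le _ (Finset.mem_univ i)
  obtain ⟨i₀, -, hi₀⟩ := Finset.exists_mem_eq_inf' Finset.univ_nonempty fun i => ubar i c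
  have hL_mem : L c ∈ Ioo (0 : ℝ) 1 := hL c ▸ hi₀ ▸ (hubar i₀ c hcstar).1
  have hH : 0 < H := by
    have := pos_of_mul_pos_left (hceq ▸ hcstar.1) hL_mem.1.le
    linarith
  have hsum : c * ∑ i, weightedRowSums w xstar i ≤ H * ∑ i, uhat i := by
    refine mul_sum_le_mul_sum_of_isMaxOn (convex_fractionalMatchings.linear_image _)
      (mem_image_of_mem _ hxhat_feas)
      (ite_zero_mem_image_weightedRowSums hxstar_feas fun i => ubar i c ≤ uhat i)
      (by rintro _ ⟨x, hx, rfl⟩; exact hxhat_opt x hx)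
      (fun i => hasDerivAt_payoff (hqc i).concaveOn (hq0 i) (hq1 i) (huhat i) (hqd i _ (huhat i)))
      fun i => ?_
    have hρ0 : marginalPayoff (q i) 0 ≤ H := by
      simpa [marginalPayoff, hq0] using
        hHdef ▸ Finset.le_sup' (fun i => deriv (q i) 0) (Finset.mem_univ i)
    exact mul_le_of_antitoneOn (hmono i) hρ0 (hubar i c hcstar).2.1 hcstar.1.le hceq
      hL_mem.2.le (hL_le i) (Ioo_subset_Icc_self (hubar i c hcstar).1) (huhat i)
      (weightedRowSums_mem_Icc hw hxstar_feas i)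
  rw [ge_iff_le, ← mul_le_mul_iff_of_pos_left hH]
  calc H * (L c / 2 * ∑ i, weightedRowSums w xstar i) = c * ∑ i, weightedRowSums w xstar i := by
        linear_combination -(∑ i, weightedRowSums w xstar i) * hceq
    _ ≤ H * ∑ i, uhat i := hsum

/-- Theorem 1 (Price of Anarchy bound): if `xstar` is a fair-optimal feasible matching
and `xhat` a selfish-optimal feasible matching, then
`∑ i, uhat i ≥ (L cstar / 2) * ∑ i, ustar i`, where `cstar ∈ (0, h)` is the unique
solution of `c = (H/2) * L c`. -/
theorem price_of_anarchy_bound {ι κ : Type*} [Fintype ι] [Fintype κ] [Nonempty ι]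
    (w : ι → κ → ℝ) (hw : ∀ i j, w i j ∈ Set.Icc (0:ℝ) 1)
    (q : ι → ℝ → ℝ)
    (hq0 : ∀ i, q i 0 = 0) (hq1 : ∀ i, q i 1 = 0)
    (hq2 : ∀ i, ∀ u ∈ Set.Icc (0:ℝ) 1,
      DifferentiableAt ℝ (q i) u ∧ DifferentiableAt ℝ (deriv (q i)) u)
    (hqc : ∀ i, StrictConcaveOn ℝ (Set.Icc (0:ℝ) 1) (q i))
    (h H : ℝ)
    (hdef : h = Finset.univ.inf' Finset.univ_nonempty (fun i => deriv (q i) 0))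
    (hHdef : H = Finset.univ.sup' Finset.univ_nonempty (fun i => deriv (q i) 0))
    (hpos : 0 < h)
    (π : ι → ℝ → ℝ) (hπ : ∀ i u, π i u = q i u / (1 + q i u))
    (ubar : ι → ℝ → ℝ)
    (hubar : ∀ i, ∀ c ∈ Set.Ioo (0:ℝ) h,
      ubar i c ∈ Set.Ioo (0:ℝ) 1 ∧
      deriv (q i) (ubar i c) / (1 + q i (ubar i c)) ^ 2 = c ∧
      ∀ u ∈ Set.Ioo (0:ℝ) 1, deriv (q i) u / (1 + q i u) ^ 2 = c → u = ubar i c)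
    (L : ℝ → ℝ)
    (hL : ∀ c, L c = Finset.univ.inf' Finset.univ_nonempty (fun i => ubar i c))
    (cstar : ℝ) (hcstar : cstar ∈ Set.Ioo (0:ℝ) h) (hceq : cstar = H / 2 * L cstar)
    (feasible : (ι → κ → ℝ) → Prop)
    (hfeasible : ∀ x, feasible x ↔
      (∀ i j, 0 ≤ x i j) ∧ (∀ i, ∑ j, x i j ≤ 1) ∧ (∀ j, ∑ i, x i j ≤ 1))
    (util : (ι → κ → ℝ) → ι → ℝ)
    (hutil : ∀ x i, util x i = ∑ j, w i j * x i j)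
    (xstar : ι → κ → ℝ) (hxstar_feas : feasible xstar)
    (hxstar_opt : ∀ x, feasible x → ∑ i, util x i ≤ ∑ i, util xstar i)
    (xhat : ι → κ → ℝ) (hxhat_feas : feasible xhat)
    (hxhat_opt : ∀ x, feasible x → ∑ i, π i (util x i) ≤ ∑ i, π i (util xhat i)) :
    ∑ i, util xhat i ≥ L cstar / 2 * ∑ i, util xstar i :=
  price_of_anarchy_bound_general w hw q hq0 hq1 hq2 hqc h H hHdef π hπ ubar hubar L hL cstar hcstar
    hceq feasible hfeasible util hutil xstar hxstar_feas xhat hxhat_feas hxhat_opt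
end

section
/- Let q : ℝ → ℝ satisfy (A1) q(0) = q(1) = 0, (A2) q is twice differentiable on [0,1], and (A3) q is strictly concave on [0,1], and let u' ∈ (0,1) be a point with q'(u') = 0. Then the function u ↦ −q(u)²/q'(u) is strictly decreasing on the interval (u', 1). -/
/-- If `q` satisfies (A1)-(A3) and `u' ∈ (0,1)` is a point with `q' u' = 0`, then
`u ↦ -(q u)^2 / q' u` is strictly decreasing on `(u', 1)`. -/
theorem neg_sq_div_deriv_strictAntiOn (q : ℝ → ℝ)
    (hq0 : q 0 = 0) (hq1 : q 1 = 0)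
    (hq2 : ∀ u ∈ Set.Icc (0:ℝ) 1, DifferentiableAt ℝ q u ∧ DifferentiableAt ℝ (deriv q) u)
    (hqc : StrictConcaveOn ℝ (Set.Icc (0:ℝ) 1) q)
    (u' : ℝ) (hu' : u' ∈ Set.Ioo (0:ℝ) 1) (hcrit : deriv q u' = 0) :
    StrictAntiOn (fun u => -(q u) ^ 2 / deriv q u) (Set.Ioo u' 1) := by
  obtain ⟨hu0, hu1⟩ := hu'
  -- q is positive on (0,1)
  have hqpos : ∀ u ∈ Set.Ioo (0:ℝ) 1, 0 < q u := by
    intro u ⟨h0, h1⟩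
    have := hqc.2 (Set.mem_Icc.2 ⟨le_refl (0:ℝ), zero_le_one⟩)
      (Set.mem_Icc.2 ⟨zero_le_one, le_refl (1:ℝ)⟩) (by norm_num)
      (show (0:ℝ) < 1 - u by linarith) h0 (by ring)
    simp only [smul_eq_mul, hq0, hq1, mul_zero, mul_one, add_zero, zero_add] at this
    linarith
  -- deriv q is strictly anti on [0,1]
  have hanti : StrictAntiOn (deriv q) (Set.Icc (0:ℝ) 1) :=
    hqc.strictAntiOn_deriv fun x hx => (hq2 x hx).1
  have hIoosub : Set.Ioo u' 1 ⊆ Set.Icc (0:ℝ) 1 := fun x ⟨hx1, hx2⟩ =>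
    ⟨by linarith, le_of_lt hx2⟩
  have hderivneg : ∀ x ∈ Set.Ioo u' 1, deriv q x < 0 := by
    intro x hx
    have := hanti (Set.mem_Icc.2 ⟨le_of_lt hu0, le_of_lt hu1⟩) (hIoosub hx) hx.1
    linarith [hcrit ▸ this]
  -- q strictly anti on [u',1]
  have hqanti : StrictAntiOn q (Set.Icc u' 1) := by
    apply strictAntiOn_of_deriv_neg (convex_Icc u' 1)
    · apply ContinuousOn.mono _ (Set.Icc_subset_Icc (le_of_lt hu0) le_rfl)
      intro x hx
      exact ((hq2 x hx).1).continuousAt.continuousWithinAt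
    · intro x hx
      rw [interior_Icc] at hx
      exact hderivneg x hx
  -- main argument
  intro x hx y hy hxy
  have hqx : 0 < q x := hqpos x ⟨lt_trans hu0 hx.1, hx.2⟩
  have hqy : 0 < q y := hqpos y ⟨lt_trans hu0 hy.1, hy.2⟩
  have hdx : deriv q x < 0 := hderivneg x hx
  have hdy : deriv q y < 0 := hderivneg y hy
  have hqxy : q y < q x :=
    hqanti ⟨le_of_lt hx.1, le_of_lt hx.2⟩ ⟨le_of_lt hy.1, le_of_lt hy.2⟩ hxy
  have hdxy : deriv q y < deriv q x :=
    hanti (hIoosub hx) (hIoosub hy) hxy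
  simp only
  simp only [neg_div, ← div_neg]
  rw [div_lt_div_iff₀ (by linarith) (by linarith)]
  exact mul_lt_mul'' (by nlinarith) (by linarith) (by positivity) (by linarith)
end

section
/- Let q : ℝ → ℝ satisfy (A1) q(0) = q(1) = 0, (A2) q is twice differentiable on [0,1], and (A3) q is strictly concave on [0,1], and let u' ∈ (0,1) be the point with q'(u') = 0. Then for every ε > 0 there exists at most one u ∈ (u', 1) satisfying ε·q'(u) = −q(u)². -/
/-- If `q` satisfies (A1)-(A3) with interior critical point `u' ∈ (0,1)`, then for
every `ε > 0` there is at most one `u ∈ (u', 1)` with `ε * q' u = -(q u)^2`. -/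
theorem at_most_one_critical_point (q : ℝ → ℝ)
    (hq0 : q 0 = 0) (hq1 : q 1 = 0)
    (hq2 : ∀ u ∈ Set.Icc (0:ℝ) 1, DifferentiableAt ℝ q u ∧ DifferentiableAt ℝ (deriv q) u)
    (hqc : StrictConcaveOn ℝ (Set.Icc (0:ℝ) 1) q)
    (u' : ℝ) (hu' : u' ∈ Set.Ioo (0:ℝ) 1) (hcrit : deriv q u' = 0) :
    ∀ ε : ℝ, 0 < ε →
      ∀ u₁ ∈ Set.Ioo u' 1, ∀ u₂ ∈ Set.Ioo u' 1,
        ε * deriv q u₁ = -(q u₁) ^ 2 → ε * deriv q u₂ = -(q u₂) ^ 2 → u₁ = u₂ := by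
  intro ε hε u₁ h₁ u₂ h₂ e₁ e₂
  obtain ⟨hu'0, hu'1⟩ := hu'
  have hdiff : ∀ x ∈ Set.Icc (0:ℝ) 1, DifferentiableAt ℝ q x := fun x hx => (hq2 x hx).1
  -- derivative strictly anti-monotone on [0,1]
  have hanti : StrictAntiOn (deriv q) (Set.Icc (0:ℝ) 1) := hqc.strictAntiOn_deriv hdiff
  -- membership facts
  have hm : ∀ u ∈ Set.Ioo u' 1, u ∈ Set.Icc (0:ℝ) 1 := fun u hu =>
    ⟨le_of_lt (hu'0.trans hu.1), le_of_lt hu.2⟩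
  have hm' : u' ∈ Set.Icc (0:ℝ) 1 := ⟨le_of_lt hu'0, le_of_lt hu'1⟩
  -- q positive on (0,1)
  have hpos : ∀ u ∈ Set.Ioo (0:ℝ) 1, 0 < q u := by
    intro u hu
    have h01 : (0:ℝ) ≠ (1:ℝ) := by norm_num
    have := hqc.2 (Set.mem_Icc.2 ⟨le_refl (0:ℝ), by norm_num⟩)
      (Set.mem_Icc.2 ⟨by norm_num, le_refl (1:ℝ)⟩)
      h01 (sub_pos.2 hu.2) hu.1 (by ring)
    simp only [smul_eq_mul, mul_zero, mul_one, zero_add, hq0, hq1] at this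
    linarith
  -- deriv q negative on (u',1)
  have hdneg : ∀ u ∈ Set.Ioo u' 1, deriv q u < 0 := by
    intro u hu
    have := hanti hm' (hm u hu) hu.1
    rwa [hcrit] at this
  -- q strictly decreasing on [u',1]
  have hqanti : StrictAntiOn q (Set.Icc u' 1) := by
    apply strictAntiOn_of_deriv_neg (convex_Icc u' 1)
    · exact ContinuousOn.mono (fun x hx => (hdiff x hx).continuousAt.continuousWithinAt)
        (fun x hx => ⟨le_trans (le_of_lt hu'0) hx.1, hx.2⟩)
    · intro x hx
      rw [interior_Icc] at hx
      exact hdneg x hx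
  -- WLOG argument
  rcases lt_trichotomy u₁ u₂ with h | h | h
  · exfalso
    have hd : deriv q u₂ < deriv q u₁ := hanti (hm _ h₁) (hm _ h₂) h
    have hqlt : q u₂ < q u₁ := hqanti ⟨le_of_lt h₁.1, le_of_lt h₁.2⟩
      ⟨le_of_lt h₂.1, le_of_lt h₂.2⟩ h
    have hq2pos : 0 < q u₂ := hpos u₂ ⟨hu'0.trans h₂.1, h₂.2⟩
    have hsq : q u₂ ^ 2 < q u₁ ^ 2 := by nlinarith
    nlinarith
  · exact h
  · exfalso
    have hd : deriv q u₁ < deriv q u₂ := hanti (hm _ h₂) (hm _ h₁) h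
    have hqlt : q u₁ < q u₂ := hqanti ⟨le_of_lt h₂.1, le_of_lt h₂.2⟩
      ⟨le_of_lt h₁.1, le_of_lt h₁.2⟩ h
    have hq1pos : 0 < q u₁ := hpos u₁ ⟨hu'0.trans h₁.1, h₁.2⟩
    nlinarith
end

section
/- (Lemma 1.) Let q : ℝ → ℝ satisfy (A1) q(0) = q(1) = 0, (A2) q is twice differentiable on [0,1], and (A3) q is strictly concave on [0,1], with interior critical point u' ∈ (0,1) (q'(u') = 0). Suppose for each ε > 0 (small) u*(ε) ∈ (u', 1) satisfies ε·q'(u*(ε)) = −q(u*(ε))². Then u*(ε) → 1 as ε → 0⁺. -/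
open Filter Topology in
/-- Lemma 1: if `q` satisfies (A1)-(A3) with interior critical point `u' ∈ (0,1)`, and
for each `ε > 0`, `ustar ε ∈ (u', 1)` satisfies `ε * q' (ustar ε) = -(q (ustar ε))^2`,
then `ustar ε → 1` as `ε → 0⁺`. -/
theorem maximizer_tendsto_one (q : ℝ → ℝ)
    (hq0 : q 0 = 0) (hq1 : q 1 = 0)
    (hq2 : ∀ u ∈ Set.Icc (0:ℝ) 1, DifferentiableAt ℝ q u ∧ DifferentiableAt ℝ (deriv q) u)
    (hqc : StrictConcaveOn ℝ (Set.Icc (0:ℝ) 1) q)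
    (u' : ℝ) (hu' : u' ∈ Set.Ioo (0:ℝ) 1) (hcrit : deriv q u' = 0)
    (ustar : ℝ → ℝ)
    (hustar : ∀ ε : ℝ, 0 < ε → ustar ε ∈ Set.Ioo u' 1 ∧
      ε * deriv q (ustar ε) = -(q (ustar ε)) ^ 2) :
    Tendsto ustar (𝓝[>] (0:ℝ)) (𝓝 1) := by
  -- q > 0 on (0,1)
  have qpos : ∀ x ∈ Set.Ioo (0:ℝ) 1, 0 < q x := by
    intro x hx
    have ha : (0:ℝ) < 1 - x := by linarith [hx.2]
    have hab : (1 - x) + x = 1 := by ring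
    have h := hqc.2 (Set.mem_Icc.2 ⟨le_refl 0, zero_le_one⟩)
      (Set.mem_Icc.2 ⟨zero_le_one, le_refl 1⟩) (by norm_num) ha hx.1 hab
    simpa [hq0, hq1] using h
  -- continuity of q and deriv q on [0,1]
  have contq : ContinuousOn q (Set.Icc (0:ℝ) 1) := fun u hu =>
    ((hq2 u hu).1.continuousAt).continuousWithinAt
  have contq' : ContinuousOn (deriv q) (Set.Icc (0:ℝ) 1) := fun u hu =>
    ((hq2 u hu).2.continuousAt).continuousWithinAt
  obtain ⟨M, hM⟩ := isCompact_Icc.exists_bound_of_continuousOn contq'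
  have hM0 : 0 ≤ M := le_trans (norm_nonneg _)
    (hM 0 (Set.mem_Icc.2 ⟨le_refl 0, zero_le_one⟩))
  rw [Metric.tendsto_nhds]
  intro δ hδ
  set c : ℝ := max u' (1 - δ) with hc
  have hcu : u' ≤ c := le_max_left _ _
  have hc1 : c < 1 := max_lt hu'.2 (by linarith)
  have hsub : Set.Icc u' c ⊆ Set.Ioo (0:ℝ) 1 := fun x hx =>
    ⟨lt_of_lt_of_le hu'.1 hx.1, lt_of_le_of_lt hx.2 hc1⟩
  have hsub' : Set.Icc u' c ⊆ Set.Icc (0:ℝ) 1 := fun x hx =>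
    ⟨(hsub hx).1.le, (hsub hx).2.le⟩
  obtain ⟨z, hz, hzmin⟩ := isCompact_Icc.exists_isMinOn ⟨u', le_refl u', hcu⟩
    (contq.mono hsub')
  set m : ℝ := q z with hm
  have hmpos : 0 < m := qpos z (hsub hz)
  have hε0 : (0:ℝ) < m ^ 2 / (M + 1) := by positivity
  filter_upwards [Ioo_mem_nhdsGT_of_mem ⟨le_refl (0:ℝ), hε0⟩] with ε hε
  obtain ⟨hmem, heq⟩ := hustar ε hε.1
  have hgt : c < ustar ε := by
    by_contra h
    push_neg at h
    have hx : ustar ε ∈ Set.Icc u' c := ⟨hmem.1.le, h⟩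
    have h1 : m ≤ q (ustar ε) := hzmin hx
    have h2 : -deriv q (ustar ε) ≤ M := by
      have := hM (ustar ε) (hsub' hx)
      have := abs_le.1 (by simpa [Real.norm_eq_abs] using this)
      linarith [this.1]
    have h3 : q (ustar ε) ^ 2 = ε * (-deriv q (ustar ε)) := by linarith [heq]
    have h4 : q (ustar ε) ^ 2 ≤ ε * M := by
      rw [h3]; exact mul_le_mul_of_nonneg_left h2 hε.1.le
    have h5 : m ^ 2 ≤ q (ustar ε) ^ 2 := by nlinarith
    have h6 : ε * (M + 1) < m ^ 2 := by
      have := hε.2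
      calc ε * (M + 1) < m ^ 2 / (M + 1) * (M + 1) := by
            apply mul_lt_mul_of_pos_right this; linarith
        _ = m ^ 2 := by field_simp
    nlinarith
  have h1c : 1 - c ≤ δ := by
    have : 1 - δ ≤ c := le_max_right _ _
    linarith
  have : dist (ustar ε) 1 = 1 - ustar ε := by
    rw [Real.dist_eq, abs_of_nonpos (by linarith [hmem.2])]; ring
  rw [this]
  linarith [hmem.2]
end

section
/- There is a unique u ∈ (0,1) satisfying u/2 = (1 − 2u)/((1 − u)·u + 1)². Moreover this unique solution lies in the interval (0.36, 0.37). -/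
private noncomputable def pfun (u : ℝ) : ℝ := u^5 - 2*u^4 - u^3 + 2*u^2 + 5*u - 2

private lemma p_mono {a b : ℝ} (a0 : 0 < a) (a1 : a < 1) (b0 : 0 < b) (b1 : b < 1)
    (h : a < b) : pfun a < pfun b := by
  have hQ : a^4 + a^3*b + a^2*b^2 + a*b^3 + b^4
      - 2*(a^3 + a^2*b + a*b^2 + b^3) - (a^2 + a*b + b^2) + 2*(a+b) + 5 > 0 := by
    nlinarith [mul_pos (mul_pos a0 (by linarith : (0:ℝ) < 1-a))
        (mul_pos (by linarith : (0:ℝ) < 2-a) (by linarith : (0:ℝ) < 1+a)),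
      mul_pos (mul_pos b0 (by linarith : (0:ℝ) < 1-b))
        (mul_pos (by linarith : (0:ℝ) < 2-b) (by linarith : (0:ℝ) < 1+b)),
      mul_nonneg (mul_pos a0 b0).le (sq_nonneg (a-1)),
      mul_nonneg (mul_pos a0 b0).le (sq_nonneg (b-1)),
      mul_pos (mul_pos a0 b0) (mul_pos a0 b0),
      mul_pos a0 b0,
      mul_pos (mul_pos a0 b0) (mul_pos (by linarith : (0:ℝ)<1-a) (by linarith : (0:ℝ)<1-b))]
  have key : pfun b - pfun a = (b - a) * (a^4 + a^3*b + a^2*b^2 + a*b^3 + b^4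
      - 2*(a^3 + a^2*b + a*b^2 + b^3) - (a^2 + a*b + b^2) + 2*(a+b) + 5) := by
    unfold pfun; ring
  nlinarith [mul_pos (sub_pos.mpr h) hQ]

private lemma eq_iff_p {u : ℝ} (hu : u ∈ Set.Ioo (0:ℝ) 1) :
    (u / 2 = (1 - 2 * u) / ((1 - u) * u + 1) ^ 2) ↔ pfun u = 0 := by
  obtain ⟨h0, h1⟩ := hu
  have hd : (1 - u) * u + 1 > 0 := by nlinarith
  rw [pfun, div_eq_div_iff (by norm_num) (by positivity)]
  constructor <;> intro h <;> nlinarith [h]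

private lemma p_uniq {a b : ℝ} (ha : a ∈ Set.Ioo (0:ℝ) 1) (hb : b ∈ Set.Ioo (0:ℝ) 1)
    (hpa : pfun a = 0) (hpb : pfun b = 0) : a = b := by
  obtain ⟨a0, a1⟩ := ha; obtain ⟨b0, b1⟩ := hb
  by_contra hne
  rcases lt_or_gt_of_ne hne with h | h
  · exact absurd (hpa.trans hpb.symm) (ne_of_lt (p_mono a0 a1 b0 b1 h))
  · exact absurd (hpb.trans hpa.symm) (ne_of_lt (p_mono b0 b1 a0 a1 h))

private lemma p_root_exists : ∃ u ∈ Set.Ioo (0.36:ℝ) 0.37, pfun u = 0 := by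
  have hc : ContinuousOn pfun (Set.Icc (0.36:ℝ) 0.37) := by
    apply Continuous.continuousOn; unfold pfun; continuity
  have h := intermediate_value_Ioo (by norm_num : (0.36:ℝ) ≤ 0.37) hc
  have hm : (0:ℝ) ∈ Set.Ioo (pfun 0.36) (pfun 0.37) := by
    constructor <;> (unfold pfun; norm_num)
  obtain ⟨u, hu, hu0⟩ := h hm
  exact ⟨u, hu, hu0⟩

/-- Example 1: there is a unique `u ∈ (0,1)` with `u/2 = (1 - 2u)/((1 - u)u + 1)^2`,
and this unique solution lies in `(0.36, 0.37)`. -/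
theorem example_fixed_point :
    (∃! u : ℝ, u ∈ Set.Ioo (0:ℝ) 1 ∧ u / 2 = (1 - 2 * u) / ((1 - u) * u + 1) ^ 2) ∧
    (∀ u : ℝ, u ∈ Set.Ioo (0:ℝ) 1 → u / 2 = (1 - 2 * u) / ((1 - u) * u + 1) ^ 2 →
      u ∈ Set.Ioo (0.36 : ℝ) 0.37) := by
  obtain ⟨v, hv, hpv⟩ := p_root_exists
  have hv' : v ∈ Set.Ioo (0:ℝ) 1 := ⟨by linarith [hv.1], by linarith [hv.2]⟩
  constructor
  · refine ⟨v, ⟨hv', (eq_iff_p hv').mpr hpv⟩, ?_⟩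
    rintro u ⟨hu, heq⟩
    exact p_uniq hu hv' ((eq_iff_p hu).mp heq) hpv
  · intro u hu heq
    have := p_uniq hu hv' ((eq_iff_p hu).mp heq) hpv
    rw [this]; exact hv
end
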